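/- Scalar core of the enhanced Helly convergence (Claims 1 and 3 in the proof of Theorem 4.3, eq. (4.3) of the paper): Let T > 0 and let (f_k)_{k∈ℕ} be a sequence of functions f_k : [0,T] → ℝ with sup_k Var(f_k;[0,T]) < ∞, and suppose that f_k(t) → f(t) as k → ∞ for every t ∈ [0,T]. Then there exist a subsequence (f_{k_j})_j and an at most countable set J ⊂ [0,T] such that for every t ∈ [0,T] \ J and every sequence (t_j)_j ⊂ [0,T] with t_j → t, one has f_{k_j}(t_j) → f(t) as j → ∞. -/

import Mathlib

/-!
The variation functions `V_k x = Var(f_k; S ∩ (-∞, x])` are monotone and uniformly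
bounded, so by compactness a subsequence converges at every rational. The limit, extended
monotonically to `ℝ`, is continuous off a countable set `J`. At `t ∉ J` there are rationals
`s < t < u` with small limiting increment, and `dist (f_k a) (f_k t) ≤ V_k u - V_k s` for
`a ∈ (s, u]` makes the subsequence asymptotically equicontinuous at `t`; pointwise convergence
at `t` does the rest.
-/

open Filter Topology Set

/-- For `S = [0, T]` this is the paper's `Var(f; [0, x])`; it is `0` when that variation is
infinite. -/
noncomputable def cumulativeVariation {α E : Type*} [LinearOrder α] [PseudoEMetricSpace E]
    (f : α → E) (S : Set α) (x : α) : ℝ :=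
  (eVariationOn f (S ∩ Iic x)).toReal

theorem eVariationOn.add_edist_le_Iic {α E : Type*} [LinearOrder α] [PseudoEMetricSpace E]
    {f : α → E} {S : Set α} {s u a b : α}
    (ha : a ∈ S ∩ Ioc s u) (hb : b ∈ S ∩ Ioc s u) :
    eVariationOn f (S ∩ Iic s) + edist (f a) (f b) ≤ eVariationOn f (S ∩ Iic u) :=
  calc eVariationOn f (S ∩ Iic s) + edist (f a) (f b)
      ≤ eVariationOn f (S ∩ Iic s) + eVariationOn f (S ∩ Ioc s u) := by
        gcongr; exact eVariationOn.edist_le f ha hb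
    _ ≤ eVariationOn f (S ∩ Iic s ∪ S ∩ Ioc s u) :=
        eVariationOn.add_le_union f fun _ hx _ hy => hx.2.trans hy.2.1.le
    _ ≤ eVariationOn f (S ∩ Iic u) := by
        refine eVariationOn.mono f (union_subset ?_ ?_)
        · exact inter_subset_inter_right S (Iic_subset_Iic.2 (ha.2.1.le.trans ha.2.2))
        · exact inter_subset_inter_right S Ioc_subset_Iic_self

namespace cumulativeVariation

variable {α E : Type*} [LinearOrder α] {f : α → E} {S : Set α}

theorem monotone [PseudoEMetricSpace E] (hf : BoundedVariationOn f S) :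
    Monotone (cumulativeVariation f S) := fun _ _ hxy =>
  ENNReal.toReal_mono (ne_top_of_le_ne_top hf (eVariationOn.mono f inter_subset_left))
    (eVariationOn.mono f (inter_subset_inter_right S (Iic_subset_Iic.2 hxy)))

theorem nonneg [PseudoEMetricSpace E] (x : α) : 0 ≤ cumulativeVariation f S x :=
  ENNReal.toReal_nonneg

theorem le_of_eVariationOn_le [PseudoEMetricSpace E] {C : ℝ} (hC : 0 ≤ C)
    (h : eVariationOn f S ≤ ENNReal.ofReal C) (x : α) : cumulativeVariation f S x ≤ C :=
  ENNReal.toReal_le_of_le_ofReal hC ((eVariationOn.mono f inter_subset_left).trans h)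

theorem dist_le_sub [PseudoMetricSpace E] (hf : BoundedVariationOn f S) {s u a b : α}
    (ha : a ∈ S ∩ Ioc s u) (hb : b ∈ S ∩ Ioc s u) :
    dist (f a) (f b) ≤ cumulativeVariation f S u - cumulativeVariation f S s := by
  have hu : eVariationOn f (S ∩ Iic u) ≠ ⊤ :=
    ne_top_of_le_ne_top hf (eVariationOn.mono f inter_subset_left)
  have key := eVariationOn.add_edist_le_Iic (f := f) ha hb
  have hs : eVariationOn f (S ∩ Iic s) ≠ ⊤ := ne_top_of_le_ne_top hu (le_self_add.trans key)
  rw [edist_dist] at key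
  have hreal := (ENNReal.toReal_le_toReal (by finiteness) hu).2 key
  rw [ENNReal.toReal_add hs ENNReal.ofReal_ne_top, ENNReal.toReal_ofReal dist_nonneg] at hreal
  unfold cumulativeVariation
  linarith

end cumulativeVariation

theorem exists_strictMono_tendsto_of_mem_Icc {ι : Type*} [Countable ι] {a b : ℝ}
    (g : ℕ → ι → ℝ) (hg : ∀ k i, g k i ∈ Icc a b) :
    ∃ L : ι → ℝ, ∃ κ : ℕ → ℕ, StrictMono κ ∧
      ∀ i, Tendsto (fun j => g (κ j) i) atTop (𝓝 (L i)) := by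
  obtain ⟨L, κ, hκ, hL⟩ :=
    CompactSpace.tendsto_subseq fun k i => (⟨g k i, hg k i⟩ : Icc a b)
  exact ⟨fun i => L i, κ, hκ, fun i =>
    (continuous_subtype_val.tendsto _).comp (tendsto_pi_nhds.1 hL i)⟩

theorem Monotone.exists_countable_forall_rat_sub_lt {ℓ : ℚ → ℝ} (hℓ : Monotone ℓ) :
    ∃ J : Set ℝ, J.Countable ∧ ∀ t ∉ J, ∀ ε > 0,
      ∃ s u : ℚ, (s : ℝ) < t ∧ t < u ∧ ℓ u - ℓ s < ε := by
  set G : ℝ → ℝ := fun x => sSup (ℓ '' {q : ℚ | (q : ℝ) ≤ x})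
  have hbdd : ∀ x, BddAbove (ℓ '' {q : ℚ | (q : ℝ) ≤ x}) := fun x =>
    let ⟨r, hr⟩ := exists_rat_gt x
    ⟨ℓ r, forall_mem_image.2 fun q hq =>
      hℓ (by exact_mod_cast (hq.trans hr.le : (q : ℝ) ≤ r))⟩
  have hG_mono : Monotone G := fun x y hxy =>
    csSup_le_csSup (hbdd y) (let ⟨q, hq⟩ := exists_rat_lt x; ⟨ℓ q, q, hq.le, rfl⟩)
      (image_mono fun _ hq => le_trans hq hxy)
  have hG_rat : ∀ q : ℚ, G q = ℓ q := fun q =>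
    le_antisymm
      (csSup_le ⟨ℓ q, q, le_refl (q : ℝ), rfl⟩
        (forall_mem_image.2 fun r hr => hℓ (by exact_mod_cast hr)))
      (le_csSup (hbdd q) ⟨q, le_refl (q : ℝ), rfl⟩)
  refine ⟨{x | ¬ContinuousAt G x}, hG_mono.countable_not_continuousAt, fun t ht ε hε => ?_⟩
  obtain ⟨δ, hδ, hGδ⟩ := Metric.continuousAt_iff.1 (not_not.1 ht) (ε / 2) (half_pos hε)
  obtain ⟨s, hs⟩ := exists_rat_btwn (sub_lt_self t hδ)
  obtain ⟨u, hu⟩ := exists_rat_btwn (lt_add_of_pos_right t hδ)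
  refine ⟨s, u, hs.2, hu.1, ?_⟩
  have hGu := hGδ (x := u) (by rw [Real.dist_eq, abs_sub_lt_iff]; constructor <;> linarith)
  have hGs := hGδ (x := s) (by rw [Real.dist_eq, abs_sub_lt_iff]; constructor <;> linarith)
  rw [hG_rat, Real.dist_eq, abs_sub_lt_iff] at hGu hGs
  linarith [hGu.1, hGs.2]

theorem tendsto_uncurry_of_tendsto_cumulativeVariation {E : Type*} [PseudoMetricSpace E]
    {S : Set ℝ} {g : ℕ → ℝ → E} {ℓ : ℚ → ℝ} {t : ℝ} {y : E}
    (hg : ∀ j, BoundedVariationOn (g j) S)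
    (hℓ : ∀ q : ℚ, Tendsto (fun j => cumulativeVariation (g j) S q) atTop (𝓝 (ℓ q)))
    (hgap : ∀ ε > 0, ∃ s u : ℚ, (s : ℝ) < t ∧ t < u ∧ ℓ u - ℓ s < ε)
    (ht : t ∈ S) (hy : Tendsto (fun j => g j t) atTop (𝓝 y)) :
    Tendsto (fun p : ℕ × ℝ => g p.1 p.2) (atTop ×ˢ 𝓝[S] t) (𝓝 y) := by
  rw [Metric.tendsto_nhds]
  intro ε hε
  obtain ⟨s, u, hst, htu, hsu⟩ := hgap (ε / 2) (half_pos hε)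
  have hsmall : ∀ᶠ j in atTop,
      cumulativeVariation (g j) S u - cumulativeVariation (g j) S s < ε / 2 :=
    ((hℓ u).sub (hℓ s)).eventually_lt_const hsu
  have hnear : ∀ᶠ a in 𝓝[S] t, a ∈ S ∩ Ioc (s : ℝ) u :=
    inter_mem self_mem_nhdsWithin
      (mem_nhdsWithin_of_mem_nhds (mem_of_superset (Ioo_mem_nhds hst htu) Ioo_subset_Ioc_self))
  filter_upwards [(hsmall.and (Metric.tendsto_nhds.1 hy _ (half_pos hε))).prod_mk hnear]
    with ⟨j, a⟩ ⟨⟨hj, hjy⟩, ha⟩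
  calc dist (g j a) y ≤ dist (g j a) (g j t) + dist (g j t) y := dist_triangle _ _ _
    _ < ε / 2 + ε / 2 := add_lt_add_of_le_of_lt
        ((cumulativeVariation.dist_le_sub (hg j) ha ⟨ht, hst, htu.le⟩).trans hj.le) hjy
    _ = ε := add_halves ε

theorem scalar_enhanced_helly_convergence_general
    (T : ℝ) (f : ℕ → ℝ → ℝ) (flim : ℝ → ℝ)
    (hvar : ∃ C : ℝ, ∀ k : ℕ, eVariationOn (f k) (Set.Icc 0 T) ≤ ENNReal.ofReal C)
    (hptw : ∀ t ∈ Set.Icc (0 : ℝ) T,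
      Tendsto (fun k => f k t) atTop (𝓝 (flim t))) :
    ∃ κ : ℕ → ℕ, StrictMono κ ∧ ∃ J : Set ℝ, J.Countable ∧
      ∀ t ∈ Set.Icc (0 : ℝ) T \ J, ∀ ts : ℕ → ℝ,
        (∀ j, ts j ∈ Set.Icc (0 : ℝ) T) → Tendsto ts atTop (𝓝 t) →
        Tendsto (fun j => f (κ j) (ts j)) atTop (𝓝 (flim t)) := by
  obtain ⟨C, hC⟩ := hvar
  have hbv (k : ℕ) : BoundedVariationOn (f k) (Icc 0 T) :=
    ne_top_of_le_ne_top ENNReal.ofReal_ne_top (hC k)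
  have hC' (k : ℕ) : eVariationOn (f k) (Icc 0 T) ≤ ENNReal.ofReal (max C 0) :=
    (hC k).trans (ENNReal.ofReal_le_ofReal (le_max_left C 0))
  obtain ⟨ℓ, κ, hκ, hℓ⟩ := exists_strictMono_tendsto_of_mem_Icc
    (fun k (q : ℚ) => cumulativeVariation (f k) (Icc 0 T) q) fun k q =>
      ⟨cumulativeVariation.nonneg _,
        cumulativeVariation.le_of_eVariationOn_le (le_max_right C 0) (hC' k) _⟩
  have hℓ_mono : Monotone ℓ := fun q r hqr =>
    le_of_tendsto_of_tendsto' (hℓ q) (hℓ r) fun j =>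
      cumulativeVariation.monotone (hbv (κ j)) (by exact_mod_cast hqr)
  obtain ⟨J, hJ, hgap⟩ := hℓ_mono.exists_countable_forall_rat_sub_lt
  refine ⟨κ, hκ, J, hJ, fun t ht ts hts_mem hts => ?_⟩
  have hjoint := tendsto_uncurry_of_tendsto_cumulativeVariation (fun j => hbv (κ j)) hℓ
    (hgap t ht.2) ht.1 ((hptw t ht.1).comp hκ.tendsto_atTop)
  exact hjoint.comp (tendsto_id.prodMk (tendsto_nhdsWithin_iff.2 ⟨hts, .of_forall hts_mem⟩))

/-- Scalar core of the enhanced Helly convergence: if `(f_k)` is a sequence of real-valued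
functions on `[0,T]` with uniformly bounded pointwise total variation converging pointwise to
`f` on `[0,T]`, then there are a subsequence `(f_{k_j})` and an at most countable set
`J ⊆ [0,T]` such that for every `t ∈ [0,T] \ J` and every sequence `(t_j) ⊆ [0,T]` converging
to `t`, one has `f_{k_j}(t_j) → f(t)`. -/
theorem scalar_enhanced_helly_convergence
    (T : ℝ) (hT : 0 < T) (f : ℕ → ℝ → ℝ) (flim : ℝ → ℝ)
    (hvar : ∃ C : ℝ, ∀ k : ℕ, eVariationOn (f k) (Set.Icc 0 T) ≤ ENNReal.ofReal C)
    (hptw : ∀ t ∈ Set.Icc (0 : ℝ) T,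
      Tendsto (fun k => f k t) atTop (𝓝 (flim t))) :
    ∃ κ : ℕ → ℕ, StrictMono κ ∧ ∃ J : Set ℝ, J.Countable ∧
      ∀ t ∈ Set.Icc (0 : ℝ) T \ J, ∀ ts : ℕ → ℝ,
        (∀ j, ts j ∈ Set.Icc (0 : ℝ) T) → Tendsto ts atTop (𝓝 t) →
        Tendsto (fun j => f (κ j) (ts j)) atTop (𝓝 (flim t)) :=
  scalar_enhanced_helly_convergence_general T f flim hvar hptw
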